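/- Let $k$ be a perfect field of characteristic $p>0$ and $R$ an $A$-algebra for a $k$-algebra $A$. The map $\bar v : B^1_{R/k} \to W_* B^1_{R/A}$ induced by the canonical projection $\Omega^1_{R/k} \to \Omega^1_{R/A}$ is surjective; concretely, for $r_1, r_2, r_3 \in R$ and $a \in A$ one has $(r_1 \cdot (r_2 \otimes a)) \cdot dr_3 = \bar v(d(\psi(a) r_1^p r_2^p r_3))$ in $B^1_{R/A}$. -/

import Mathlib

open TensorProduct KaehlerDifferential

/-- `(F_A)_* M`: the module `M` with `A`-action restricted along the absolute Frobenius. -/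
def FrobPush (p : ℕ) (A : Type*) [CommSemiring A] [ExpChar A p]
    (M : Type*) [AddCommMonoid M] [Module A M] : Type _ := M

instance (p : ℕ) (A : Type*) [CommSemiring A] [ExpChar A p]
    (M : Type*) [AddCommMonoid M] [Module A M] :
    AddCommMonoid (FrobPush p A M) := inferInstanceAs (AddCommMonoid M)

noncomputable instance (p : ℕ) (A : Type*) [CommSemiring A] [ExpChar A p]
    (M : Type*) [AddCommMonoid M] [Module A M] :
    Module A (FrobPush p A M) := Module.compHom M (frobenius A p)

/-- The identity map of `M`, viewed as landing in `(F_A)_* M`. -/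
def FrobPush.mk (p : ℕ) (A : Type*) [CommSemiring A] [ExpChar A p]
    (M : Type*) [AddCommMonoid M] [Module A M] : M → FrobPush p A M := id

/-- `B¹_{A/k} ⊆ (F_A)_* Ω¹_{A/k}`: the submodule generated by exact differentials.
For the pair `(A, R)` the Frobenius-twisted `R`-action (`r • ω = rᵖ ω`) realizes
`W_* B¹_{R/A}`: the restriction along the arithmetic Frobenius `W : R → R^{(p)}` of
`B¹_{R/A}` viewed as an `R^{(p)}`-module via the relative Frobenius
`F(r ⊗ a) = ψ(a) rᵖ`, since `W` followed by this action is the absolute Frobenius. -/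
noncomputable def B1 (p : ℕ) (k A : Type*) [CommRing k] [CommRing A] [Algebra k A]
    [ExpChar A p] : Submodule A (FrobPush p A (Ω[A⁄k])) :=
  Submodule.span A (Set.range fun a : A => FrobPush.mk p A (Ω[A⁄k]) (KaehlerDifferential.D k A a))

theorem Derivation.map_pow_char {R A M : Type*} [CommSemiring R] [CommSemiring A] [Algebra R A]
    [AddCommMonoid M] [Module A M] [Module R M] (D : Derivation R A M) (p : ℕ) [CharP A p]
    (a : A) : D (a ^ p) = 0 := by
  rw [Derivation.leibniz_pow, ← Nat.cast_smul_eq_nsmul A, CharP.cast_eq_zero, zero_smul]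

theorem Derivation.map_pow_char_mul {R A M : Type*} [CommSemiring R] [CommSemiring A]
    [Algebra R A] [AddCommMonoid M] [Module A M] [Module R M] (D : Derivation R A M) (p : ℕ)
    [CharP A p] (a b : A) : D (a ^ p * b) = a ^ p • D b := by
  rw [Derivation.leibniz, D.map_pow_char p, smul_zero, add_zero]

theorem charP_of_expChar_of_prime (R : Type*) [CommRing R] (p : ℕ) [Fact p.Prime] [ExpChar R p] :
    CharP R p := by
  cases ‹ExpChar R p› with
  | zero => exact absurd Fact.out Nat.not_prime_one
  | prime _ => assumption

theorem FrobPush.smul_mk (p : ℕ) (A : Type*) [CommSemiring A] [ExpChar A p]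
    (M : Type*) [AddCommMonoid M] [Module A M] (a : A) (x : M) :
    a • FrobPush.mk p A M x = FrobPush.mk p A M (a ^ p • x) := rfl

/-- Under the Frobenius-twisted action `r • ds = d(rᵖ s)` is again exact, so `B¹` is additively
generated by exact forms. -/
theorem B1.toAddSubmonoid_eq_closure (p : ℕ) [Fact p.Prime] (k R : Type*) [CommRing k]
    [CommRing R] [Algebra k R] [ExpChar R p] :
    (B1 p k R).toAddSubmonoid = AddSubmonoid.closure
      (Set.range fun r : R => FrobPush.mk p R (Ω[R⁄k]) (KaehlerDifferential.D k R r)) := by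
  have := charP_of_expChar_of_prime R p
  rw [B1, Submodule.span_eq_closure]
  congr 1
  refine subset_antisymm ?_ fun x hx => ⟨1, trivial, x, hx, one_smul R x⟩
  rintro _ ⟨r, -, _, ⟨s, rfl⟩, rfl⟩
  exact ⟨r ^ p * s, by
    dsimp only
    rw [FrobPush.smul_mk, (KaehlerDifferential.D k R).map_pow_char_mul]⟩

theorem B1.surjective_of_forall_D_mem_range (p : ℕ) [Fact p.Prime] (k R : Type*) [CommRing k]
    [CommRing R] [Algebra k R] [ExpChar R p] {X : Type*} [AddCommMonoid X] (f : X →+ B1 p k R)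
    (hf : ∀ r : R, ∃ x, (f x : FrobPush p R (Ω[R⁄k])) =
      FrobPush.mk p R (Ω[R⁄k]) (KaehlerDifferential.D k R r)) :
    Function.Surjective f := by
  rintro ⟨z, hz⟩
  suffices ∃ x, (f x : FrobPush p R (Ω[R⁄k])) = z from
    this.imp fun _ => Subtype.ext
  rw [← Submodule.mem_toAddSubmonoid, B1.toAddSubmonoid_eq_closure] at hz
  induction hz using AddSubmonoid.closure_induction with
  | mem _ h =>
    obtain ⟨r, rfl⟩ := h
    exact hf r
  | zero => exact ⟨0, by rw [map_zero]; rfl⟩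
  | add _ _ _ _ hy hz =>
    obtain ⟨x, hx⟩ := hy
    obtain ⟨x', hx'⟩ := hz
    exact ⟨x + x', by rw [map_add, Submodule.coe_add, hx, hx']⟩

theorem vbar_surjective_general
    (p : ℕ) [Fact p.Prime] (k A R : Type*)
    [Field k]
    [CommRing A] [Algebra k A] [CommRing R] [Algebra A R] [Algebra k R]
    [ExpChar R p]
    (vbar : B1 p k R →+ B1 p A R)
    (hv : ∀ (r : R),
      (vbar ⟨FrobPush.mk p R (Ω[R⁄k]) (KaehlerDifferential.D k R r),
          Submodule.subset_span ⟨r, rfl⟩⟩ : FrobPush p R (Ω[R⁄A])) =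
        FrobPush.mk p R (Ω[R⁄A]) (KaehlerDifferential.D A R r)) :
    Function.Surjective vbar ∧
      ∀ (a : A) (r₁ r₂ r₃ : R),
        (vbar ⟨FrobPush.mk p R (Ω[R⁄k])
            (KaehlerDifferential.D k R (algebraMap A R a * r₁ ^ p * r₂ ^ p * r₃)),
            Submodule.subset_span ⟨algebraMap A R a * r₁ ^ p * r₂ ^ p * r₃, rfl⟩⟩ :
          FrobPush p R (Ω[R⁄A])) =
        FrobPush.mk p R (Ω[R⁄A])
          ((algebraMap A R a * r₁ ^ p * r₂ ^ p) • KaehlerDifferential.D A R r₃) := by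
  have := charP_of_expChar_of_prime R p
  refine ⟨B1.surjective_of_forall_D_mem_range p A R vbar fun r => ⟨_, hv r⟩, ?_⟩
  intro a r₁ r₂ r₃
  have hc : KaehlerDifferential.D A R (algebraMap A R a * r₁ ^ p * r₂ ^ p) = 0 := by
    rw [mul_assoc, ← mul_pow, Derivation.leibniz, Derivation.map_pow_char,
      Derivation.map_algebraMap, smul_zero, smul_zero, add_zero]
  rw [hv, Derivation.leibniz, hc, smul_zero, add_zero]

/-- Let `k` be a perfect field of characteristic `p > 0`, `A` a
`k`-algebra and `R` an `A`-algebra.  The map `v̄ : B¹_{R/k} → W_* B¹_{R/A}` induced by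
the canonical projection `Ω¹_{R/k} → Ω¹_{R/A}` is surjective; concretely, for
`r₁, r₂, r₃ ∈ R` and `a ∈ A` one has
`(r₁ · (r₂ ⊗ a)) · dr₃ = ψ(a) r₁ᵖ r₂ᵖ dr₃ = v̄(d(ψ(a) r₁ᵖ r₂ᵖ r₃))` in `B¹_{R/A}`. -/
theorem vbar_surjective
    (p : ℕ) [Fact p.Prime] (k A R : Type*)
    [Field k] [CharP k p] [ExpChar k p] [PerfectRing k p]
    [CommRing A] [Algebra k A] [CommRing R] [Algebra A R] [Algebra k R]
    [IsScalarTower k A R] [ExpChar A p] [ExpChar R p]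
    (vbar : B1 p k R →+ B1 p A R)
    (hv : ∀ (r : R),
      (vbar ⟨FrobPush.mk p R (Ω[R⁄k]) (KaehlerDifferential.D k R r),
          Submodule.subset_span ⟨r, rfl⟩⟩ : FrobPush p R (Ω[R⁄A])) =
        FrobPush.mk p R (Ω[R⁄A]) (KaehlerDifferential.D A R r)) :
    Function.Surjective vbar ∧
      ∀ (a : A) (r₁ r₂ r₃ : R),
        (vbar ⟨FrobPush.mk p R (Ω[R⁄k])
            (KaehlerDifferential.D k R (algebraMap A R a * r₁ ^ p * r₂ ^ p * r₃)),
            Submodule.subset_span ⟨algebraMap A R a * r₁ ^ p * r₂ ^ p * r₃, rfl⟩⟩ :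
          FrobPush p R (Ω[R⁄A])) =
        FrobPush.mk p R (Ω[R⁄A])
          ((algebraMap A R a * r₁ ^ p * r₂ ^ p) • KaehlerDifferential.D A R r₃) :=
  vbar_surjective_general p k A R vbar hv
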